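/- arXiv:2003.06735 — 3 statements merged into one kernel-verified Lean document; each statement's English description precedes it below -/
import Mathlib

section
/- Let F be the CDF of a probability measure supported on [a,b] and fix ρ with 0 < ρ ≤ min{∫_a^b F(t)dt, ∫_a^b (1−F(t))dt}. Define the upper envelope 𝓕ᵘᵖ_ρ[F](t) = 0 for t < a, 𝓕ᵘᵖ_ρ[F](t) = sup{z ∈ [F(t),1] | ∫_{F(t)}^z (F⁻¹(y)−t)dy ≤ ρ} for a ≤ t < tᵘᵖ, and 𝓕ᵘᵖ_ρ[F](t) = 1 for t ≥ tᵘᵖ, where tᵘᵖ = sup{τ ∈ [a,b] | ∫_τ^b (1−F(t))dt ≥ ρ}. Then 𝓕ᵘᵖ_ρ[F] is monotone increasing on ℝ. -/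
open MeasureTheory

/-- The generalized inverse `F⁻¹(y) = inf {t | F(t) > y}` of a CDF `F`. -/
noncomputable def genInv (F : ℝ → ℝ) (y : ℝ) : ℝ := sInf {t : ℝ | F t > y}

/-- `tᵘᵖ = sup {τ ∈ [a,b] | ∫_τ^b (1 - F(s)) ds ≥ ρ}`. -/
noncomputable def tUp (F : ℝ → ℝ) (a b ρ : ℝ) : ℝ :=
  sSup {τ : ℝ | τ ∈ Set.Icc a b ∧ ρ ≤ ∫ s in τ..b, (1 - F s)}

/-- The upper CDF envelope `𝓕ᵘᵖ_ρ[F]` of `F` at 1-Wasserstein distance `ρ`. -/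
noncomputable def upperEnv (F : ℝ → ℝ) (a b ρ : ℝ) (t : ℝ) : ℝ :=
  if t < a then 0
  else if t < tUp F a b ρ then
    sSup {z : ℝ | z ∈ Set.Icc (F t) 1 ∧ ∫ y in (F t)..z, (genInv F y - t) ≤ ρ}
  else 1

open Set

/-! On `[a, tᵘᵖ)` the envelope is the largest `z` with `∫_{F(t)}^z (F⁻¹(y) - t) dy ≤ ρ`.
Passing from `t₁` to `t₂ ≥ t₁` lowers the integrand and removes the stretch `[F(t₁), F(t₂))`,
where `F⁻¹ ≥ t₁` makes the integrand nonnegative; so every `z ≥ F(t₂)` admissible for `t₁` is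
admissible for `t₂`. Left of `a` the envelope is `0`, from `tᵘᵖ` on it is `1`, and in between it
lies in `[F(t), 1] ⊆ [0, 1]`. -/

theorem monotone_ite_lt_ite_lt {α β : Type*} [LinearOrder α] [Preorder β] {a c : α}
    {g : α → β} {lo hi : β} (hg : MonotoneOn g (Ico a c)) (hlo : ∀ t ∈ Ico a c, lo ≤ g t)
    (hhi : ∀ t ∈ Ico a c, g t ≤ hi) (hlohi : lo ≤ hi) :
    Monotone fun t => if t < a then lo else if t < c then g t else hi := by
  intro s t hst
  dsimp only
  by_cases hsa : s < a
  · rw [if_pos hsa]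
    split_ifs with hta htc
    exacts [le_rfl, hlo t ⟨not_lt.1 hta, htc⟩, hlohi]
  have hta : ¬t < a := fun h => hsa (hst.trans_lt h)
  rw [if_neg hsa, if_neg hta]
  by_cases htc : t < c
  · rw [if_pos (hst.trans_lt htc), if_pos htc]
    exact hg ⟨not_lt.1 hsa, hst.trans_lt htc⟩ ⟨not_lt.1 hta, htc⟩ hst
  · rw [if_neg htc]
    split_ifs with hsc
    exacts [hhi s ⟨not_lt.1 hsa, hsc⟩, le_rfl]

theorem MonotoneOn.intervalIntegrable_of_Ico {f : ℝ → ℝ} {c d M : ℝ} (hf : MonotoneOn f (Ico c d))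
    (hM : ∀ y ∈ Ico c d, f y ≤ M) (hcd : c ≤ d) : IntervalIntegrable f volume c d := by
  have hg : MonotoneOn (fun y => if y < d then f y else M) (Icc c d) := by
    intro x hx y hy hxy
    dsimp only
    split_ifs with hxd hyd hyd
    · exact hf ⟨hx.1, hxd⟩ ⟨hy.1, hyd⟩ hxy
    · exact hM x ⟨hx.1, hxd⟩
    · exact absurd (hxy.trans_lt hyd) hxd
    · exact le_rfl
  rw [intervalIntegrable_iff_integrableOn_Icc_of_le hcd, integrableOn_Icc_iff_integrableOn_Ico]
  exact ((hg.integrableOn_isCompact isCompact_Icc).mono_set Ico_subset_Icc_self).congr_fun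
    (fun y hy => if_pos hy.2) measurableSet_Ico

theorem integral_sub_le_integral_sub_of_le {g : ℝ → ℝ} {c₁ c₂ z t₁ t₂ : ℝ} (hc : c₁ ≤ c₂)
    (hz : c₂ ≤ z) (ht : t₁ ≤ t₂) (hg₁ : IntervalIntegrable g volume c₁ c₂)
    (hg₂ : IntervalIntegrable g volume c₂ z) (hge : ∀ y ∈ Ico c₁ c₂, t₁ ≤ g y) :
    ∫ y in c₂..z, (g y - t₂) ≤ ∫ y in c₁..z, (g y - t₁) := by
  have hnonneg : 0 ≤ ∫ y in c₁..c₂, (g y - t₁) := by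
    refine intervalIntegral.integral_nonneg_of_ae_restrict hc ?_
    rw [← Measure.restrict_congr_set Ico_ae_eq_Icc]
    exact (ae_restrict_mem measurableSet_Ico).mono fun y hy => sub_nonneg.2 (hge y hy)
  calc ∫ y in c₂..z, (g y - t₂)
      ≤ ∫ y in c₂..z, (g y - t₁) :=
        intervalIntegral.integral_mono_on hz (hg₂.sub intervalIntegrable_const)
          (hg₂.sub intervalIntegrable_const) fun y _ => by linarith
    _ ≤ (∫ y in c₁..c₂, (g y - t₁)) + ∫ y in c₂..z, (g y - t₁) := le_add_of_nonneg_left hnonneg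
    _ = ∫ y in c₁..z, (g y - t₁) :=
        intervalIntegral.integral_add_adjacent_intervals (hg₁.sub intervalIntegrable_const)
          (hg₂.sub intervalIntegrable_const)

section genInv

variable {F : ℝ → ℝ} {a b y : ℝ}

theorem bddBelow_setOf_lt (h0 : ∀ t, t < a → F t = 0) (hy : 0 ≤ y) :
    BddBelow {t : ℝ | F t > y} :=
  ⟨a, fun s hs => not_lt.1 fun hsa => (hs.trans_eq (h0 s hsa)).not_ge hy⟩

theorem genInv_le (h0 : ∀ t, t < a → F t = 0) (hb : F b = 1) (hy₀ : 0 ≤ y) (hy₁ : y < 1) :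
    genInv F y ≤ b :=
  csInf_le (bddBelow_setOf_lt h0 hy₀) (hy₁.trans_eq hb.symm)

theorem le_genInv (hF : Monotone F) (hb : F b = 1) {t : ℝ} (ht : F t ≤ y) (hy : y < 1) :
    t ≤ genInv F y :=
  le_csInf ⟨b, hy.trans_eq hb.symm⟩ fun _ hs =>
    le_of_not_gt fun hst => ((hF hst.le).trans ht).not_gt hs

-- Only on `[0, 1)`: at `y = 1` the set `{t | F t > 1}` is empty and `genInv F 1 = sInf ∅ = 0`.
theorem monotoneOn_genInv (h0 : ∀ t, t < a → F t = 0) (hb : F b = 1) :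
    MonotoneOn (genInv F) (Ico 0 1) := fun _ hy₁ _ hy₂ hy =>
  csInf_le_csInf (bddBelow_setOf_lt h0 hy₁.1) ⟨b, hy₂.2.trans_eq hb.symm⟩ fun _ hs => hy.trans_lt hs

theorem intervalIntegrable_genInv (h0 : ∀ t, t < a → F t = 0) (hb : F b = 1) {c z : ℝ}
    (hc : 0 ≤ c) (hcz : c ≤ z) (hz : z ≤ 1) : IntervalIntegrable (genInv F) volume c z :=
  ((monotoneOn_genInv h0 hb).mono (Ico_subset_Ico hc hz)).intervalIntegrable_of_Ico
    (fun _ hy => genInv_le h0 hb (hc.trans hy.1) (hy.2.trans_le hz)) hcz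

end genInv

noncomputable def upperEnvSet (F : ℝ → ℝ) (ρ t : ℝ) : Set ℝ :=
  {z : ℝ | z ∈ Icc (F t) 1 ∧ ∫ y in (F t)..z, (genInv F y - t) ≤ ρ}

section upperEnvSet

variable {F : ℝ → ℝ} {ρ t z : ℝ}

theorem self_mem_upperEnvSet (hρ : 0 ≤ ρ) (ht : F t ≤ 1) : F t ∈ upperEnvSet F ρ t :=
  ⟨⟨le_rfl, ht⟩, by rwa [intervalIntegral.integral_same]⟩

theorem le_sSup_upperEnvSet (hz : z ∈ upperEnvSet F ρ t) : z ≤ sSup (upperEnvSet F ρ t) :=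
  le_csSup ⟨1, fun _ h => h.1.2⟩ hz

theorem sSup_upperEnvSet_le_one (hρ : 0 ≤ ρ) (ht : F t ≤ 1) : sSup (upperEnvSet F ρ t) ≤ 1 :=
  csSup_le ⟨F t, self_mem_upperEnvSet hρ ht⟩ fun _ hz => hz.1.2

variable {a b t₁ t₂ : ℝ} (hF : Monotone F) (h0 : ∀ t, t < a → F t = 0) (hb : F b = 1)
include hF h0 hb

theorem mem_upperEnvSet_of_le (hF₀ : 0 ≤ F t₁) (ht : t₁ ≤ t₂) (hz : z ∈ upperEnvSet F ρ t₁)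
    (hz₂ : F t₂ ≤ z) : z ∈ upperEnvSet F ρ t₂ := by
  obtain ⟨⟨-, hz₁⟩, hint⟩ := hz
  have hF₂ : F t₂ ≤ 1 := hz₂.trans hz₁
  refine ⟨⟨hz₂, hz₁⟩, (integral_sub_le_integral_sub_of_le (hF ht) hz₂ ht ?_ ?_ ?_).trans hint⟩
  · exact intervalIntegrable_genInv h0 hb hF₀ (hF ht) hF₂
  · exact intervalIntegrable_genInv h0 hb (hF₀.trans (hF ht)) hz₂ hz₁
  · exact fun y hy => le_genInv hF hb hy.1 (hy.2.trans_le hF₂)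

theorem sSup_upperEnvSet_mono (hρ : 0 ≤ ρ) (hF₀ : 0 ≤ F t₁) (hF₁ : F t₂ ≤ 1) (ht : t₁ ≤ t₂) :
    sSup (upperEnvSet F ρ t₁) ≤ sSup (upperEnvSet F ρ t₂) := by
  refine csSup_le ⟨F t₁, self_mem_upperEnvSet hρ ((hF ht).trans hF₁)⟩ fun z hz => ?_
  rcases le_total z (F t₂) with hz₂ | hz₂
  · exact hz₂.trans (le_sSup_upperEnvSet (self_mem_upperEnvSet hρ hF₁))
  · exact le_sSup_upperEnvSet (mem_upperEnvSet_of_le hF h0 hb hF₀ ht hz hz₂)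

end upperEnvSet

theorem upperEnv_monotone_general (F : ℝ → ℝ) (a b ρ : ℝ)
    (hmono : Monotone F)
    (h0 : ∀ t, t < a → F t = 0) (h1 : ∀ t, b ≤ t → F t = 1)
    (hρ : 0 < ρ) :
    Monotone (upperEnv F a b ρ) := by
  have hF₀ : ∀ t, 0 ≤ F t := fun t =>
    (h0 _ (min_lt_of_right_lt (sub_one_lt a))).symm.le.trans (hmono (min_le_left t _))
  have hF₁ : ∀ t, F t ≤ 1 := fun t => (hmono (le_max_left t b)).trans (h1 _ (le_max_right t b)).le
  show Monotone fun t =>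
    if t < a then 0 else if t < tUp F a b ρ then sSup (upperEnvSet F ρ t) else 1
  exact monotone_ite_lt_ite_lt
    (fun t₁ _ t₂ _ ht => sSup_upperEnvSet_mono hmono h0 (h1 b le_rfl) hρ.le (hF₀ t₁) (hF₁ t₂) ht)
    (fun t _ => (hF₀ t).trans (le_sSup_upperEnvSet (self_mem_upperEnvSet hρ.le (hF₁ t))))
    (fun t _ => sSup_upperEnvSet_le_one hρ.le (hF₁ t)) zero_le_one

/-- The upper CDF envelope `𝓕ᵘᵖ_ρ[F]` of a CDF `F` of a measure supported on `[a,b]`,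
with `0 < ρ ≤ min {∫_a^b F, ∫_a^b (1-F)}`, is monotone increasing on `ℝ`. -/
theorem upperEnv_monotone (F : ℝ → ℝ) (a b ρ : ℝ) (hab : a ≤ b)
    (hmono : Monotone F)
    (hrc : ∀ t, ContinuousWithinAt F (Set.Ici t) t)
    (h0 : ∀ t, t < a → F t = 0) (h1 : ∀ t, b ≤ t → F t = 1)
    (hρ : 0 < ρ)
    (hρ' : ρ ≤ min (∫ s in a..b, F s) (∫ s in a..b, (1 - F s))) :
    Monotone (upperEnv F a b ρ) :=
  upperEnv_monotone_general F a b ρ hmono h0 h1 hρ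
end

section
/- Let F be the CDF of a probability measure supported on [a,b], fix ρ > 0 with ρ ≤ min{∫_a^b F(t)dt, ∫_a^b (1−F(t))dt}, and let 𝓕ᵘᵖ_ρ[F] be the upper CDF envelope at distance ρ. Then for any CDF F' of a measure supported on [a,b] satisfying W₁(F, F') ≤ ρ, it holds that F'(t) ≤ 𝓕ᵘᵖ_ρ[F](t) for all t ∈ ℝ. -/
/-!
Only the middle branch of the envelope needs an argument, and only when `F t < F' t`. There
`∫_{F t}^{F' t} (F⁻¹(y) - t) dy` is the area of `{(y, s) | F t < y < F' t, t < s ≤ b, F s ≤ y}`.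
Slicing it the other way (Fubini), the slice at `s` lies in `[F s, F' s]` because `F'` is
monotone, so the area is at most `∫_t^b |F - F'| ≤ W₁(F, F') ≤ ρ`.
-/

open MeasureTheory Set

lemma Monotone.le_of_forall_ge_eq {α β : Type*} [LinearOrder α] [Preorder β] {F : α → β}
    {b : α} {c : β} (hF : Monotone F) (h : ∀ t, b ≤ t → F t = c) (s : α) : F s ≤ c :=
  (hF (le_max_left s b)).trans_eq (h _ (le_max_right s b))

lemma Real.volume_real_eq_of_Ioo_subset_of_subset_Icc {A : Set ℝ} {u v : ℝ} (huv : u ≤ v)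
    (hIoo : Ioo u v ⊆ A) (hIcc : A ⊆ Icc u v) : volume.real A = v - u := by
  have hA : volume A ≠ ⊤ := ((measure_mono hIcc).trans_lt measure_Icc_lt_top).ne
  refine le_antisymm ?_ ?_
  · exact (measureReal_mono hIcc measure_Icc_lt_top.ne).trans_eq (Real.volume_real_Icc_of_le huv)
  · exact (Real.volume_real_Ioo_of_le huv).symm.trans_le (measureReal_mono hIoo hA)

lemma integrable_abs_sub_of_monotone {F F' : ℝ → ℝ} {a b : ℝ}
    (hF : Monotone F) (h0 : ∀ t, t < a → F t = 0) (h1 : ∀ t, b ≤ t → F t = 1)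
    (hF' : Monotone F') (h0' : ∀ t, t < a → F' t = 0) (h1' : ∀ t, b ≤ t → F' t = 1) :
    Integrable fun s => |F s - F' s| := by
  have hsupp : Function.support (fun s => |F s - F' s|) ⊆ Icc a b := by
    intro s hs
    by_contra hs'
    rcases not_and_or.1 hs' with hsa | hbs
    · exact hs (by simp [h0 s (not_le.1 hsa), h0' s (not_le.1 hsa)])
    · exact hs (by simp [h1 s (not_le.1 hbs).le, h1' s (not_le.1 hbs).le])
  rw [← integrableOn_iff_integrable_of_support_subset hsupp]
  exact ((hF.locallyIntegrable.sub hF'.locallyIntegrable).integrableOn_isCompact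
    isCompact_Icc).abs

/-- For monotone `F` the sublevel set `{F ≤ y}` is a half-line ending at `F⁻¹(y)`. -/
lemma volume_real_Ioc_inter_setOf_le_eq_genInv_sub {F : ℝ → ℝ} {b t y : ℝ} (hF : Monotone F)
    (hb : F b = 1) (hty : F t ≤ y) (hy : y < 1) :
    volume.real (Ioc t b ∩ {s | F s ≤ y}) = genInv F y - t := by
  have hbS : b ∈ {s | F s > y} := by simpa [hb] using hy
  have hlower : ∀ s ∈ {s | F s > y}, t ≤ s := fun s hs =>
    le_of_not_gt fun hst => (hF hst.le |>.trans hty).not_gt hs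
  have hBdd : BddBelow {s | F s > y} := ⟨t, hlower⟩
  have hgb : genInv F y ≤ b := csInf_le hBdd hbS
  refine Real.volume_real_eq_of_Ioo_subset_of_subset_Icc (le_csInf ⟨b, hbS⟩ hlower) ?_ ?_
  · exact fun s hs => ⟨⟨hs.1, hs.2.le.trans hgb⟩,
      show F s ≤ y from le_of_not_gt fun hFs => (csInf_le hBdd hFs).not_gt hs.2⟩
  · exact fun s hs => ⟨hs.1.1.le, le_csInf ⟨b, hbS⟩ fun u hu =>
      le_of_not_gt fun hus => (hF hus.le |>.trans hs.2).not_gt hu⟩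

lemma integral_genInv_sub_le_setIntegral_abs_sub {F F' : ℝ → ℝ} {b t : ℝ} (hF : Monotone F)
    (hb : F b = 1) (hF' : Monotone F') (hd : F' t ≤ 1) (hcd : F t ≤ F' t)
    (hint : IntegrableOn (fun s => |F s - F' s|) (Ioc t b)) :
    ∫ y in F t..F' t, (genInv F y - t) ≤ ∫ s in Ioc t b, |F s - F' s| := by
  set E : Set (ℝ × ℝ) := {p | F p.2 ≤ p.1}
  have hE : MeasurableSet E := measurableSet_le (hF.measurable.comp measurable_snd) measurable_fst
  have hEint : Integrable (E.indicator (1 : ℝ × ℝ → ℝ))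
      ((volume.restrict (Ioo (F t) (F' t))).prod (volume.restrict (Ioc t b))) := by
    have : IsFiniteMeasure (volume.restrict (Ioo (F t) (F' t))) := by
      rw [isFiniteMeasure_restrict]; exact measure_Ioo_lt_top.ne
    have : IsFiniteMeasure (volume.restrict (Ioc t b)) := by
      rw [isFiniteMeasure_restrict]; exact measure_Ioc_lt_top.ne
    exact (integrable_const (1 : ℝ)).indicator hE
  have hslice_y : ∀ y ∈ Ioo (F t) (F' t),
      genInv F y - t = ∫ s in Ioc t b, E.indicator 1 (y, s) := fun y hy => by
    change _ = ∫ s in Ioc t b, {s | F s ≤ y}.indicator 1 s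
    have hsub : MeasurableSet {s | F s ≤ y} := measurableSet_le hF.measurable measurable_const
    rw [integral_indicator_one hsub, measureReal_restrict_apply hsub, inter_comm,
      volume_real_Ioc_inter_setOf_le_eq_genInv_sub hF hb hy.1.le (hy.2.trans_le hd)]
  have hslice_s : ∀ s ∈ Ioc t b, ∫ y in Ioo (F t) (F' t), E.indicator 1 (y, s) ≤ |F s - F' s| :=
    fun s hs => by
      change ∫ y in Ioo (F t) (F' t), (Ici (F s)).indicator 1 y ≤ _
      rw [integral_indicator_one measurableSet_Ici, measureReal_restrict_apply measurableSet_Ici]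
      calc volume.real (Ici (F s) ∩ Ioo (F t) (F' t))
          ≤ volume.real (Icc (F s) (F' s)) :=
            measureReal_mono (fun y hy => ⟨hy.1, hy.2.2.le.trans (hF' hs.1.le)⟩)
              measure_Icc_lt_top.ne
        _ = max (F' s - F s) 0 := Real.volume_real_Icc
        _ ≤ |F s - F' s| := by rw [abs_sub_comm]; exact max_le (le_abs_self _) (abs_nonneg _)
  rw [intervalIntegral.integral_of_le hcd, integral_Ioc_eq_integral_Ioo]
  calc ∫ y in Ioo (F t) (F' t), (genInv F y - t)
      = ∫ y in Ioo (F t) (F' t), ∫ s in Ioc t b, E.indicator 1 (y, s) :=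
        setIntegral_congr_fun measurableSet_Ioo hslice_y
    _ = ∫ s in Ioc t b, ∫ y in Ioo (F t) (F' t), E.indicator 1 (y, s) :=
        integral_integral_swap hEint
    _ ≤ ∫ s in Ioc t b, |F s - F' s| :=
        setIntegral_mono_on hEint.integral_prod_right hint measurableSet_Ioc hslice_s

theorem le_upperEnv_of_wasserstein_le_general (F F' : ℝ → ℝ) (a b ρ : ℝ)
    (hmono : Monotone F)
    (h0 : ∀ t, t < a → F t = 0) (h1 : ∀ t, b ≤ t → F t = 1)
    (hmono' : Monotone F')
    (h0' : ∀ t, t < a → F' t = 0) (h1' : ∀ t, b ≤ t → F' t = 1)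
    (hW : ∫ s, |F s - F' s| ≤ ρ) :
    ∀ t, F' t ≤ upperEnv F a b ρ t := by
  intro t
  have hint := integrable_abs_sub_of_monotone hmono h0 h1 hmono' h0' h1'
  unfold upperEnv
  split_ifs with hta htUp
  · exact (h0' t hta).le
  · have hS : BddAbove {z | z ∈ Icc (F t) 1 ∧ ∫ y in (F t)..z, (genInv F y - t) ≤ ρ} :=
      ⟨1, fun z hz => hz.1.2⟩
    rcases le_total (F' t) (F t) with hle | hge
    · have hρ : 0 ≤ ρ := (integral_nonneg fun _ => abs_nonneg _).trans hW
      refine hle.trans (le_csSup hS ⟨⟨le_rfl, hmono.le_of_forall_ge_eq h1 t⟩, ?_⟩)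
      rwa [intervalIntegral.integral_same]
    · refine le_csSup hS ⟨⟨hge, hmono'.le_of_forall_ge_eq h1' t⟩, ?_⟩
      calc ∫ y in F t..F' t, (genInv F y - t)
          ≤ ∫ s in Ioc t b, |F s - F' s| :=
            integral_genInv_sub_le_setIntegral_abs_sub hmono (h1 b le_rfl) hmono'
              (hmono'.le_of_forall_ge_eq h1' t) hge hint.integrableOn
        _ ≤ ∫ s, |F s - F' s| := setIntegral_le_integral hint (.of_forall fun _ => abs_nonneg _)
        _ ≤ ρ := hW
  · exact hmono'.le_of_forall_ge_eq h1' t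

/-- If `F` is the CDF of a measure supported on `[a,b]`,
`0 < ρ ≤ min {∫_a^b F, ∫_a^b (1-F)}`, and `F'` is the CDF of another measure supported on
`[a,b]` with `W₁(F, F') = ∫_ℝ |F - F'| ≤ ρ`, then `F'(t) ≤ 𝓕ᵘᵖ_ρ[F](t)` for all `t`. -/
theorem le_upperEnv_of_wasserstein_le (F F' : ℝ → ℝ) (a b ρ : ℝ) (hab : a ≤ b)
    (hmono : Monotone F)
    (hrc : ∀ t, ContinuousWithinAt F (Set.Ici t) t)
    (h0 : ∀ t, t < a → F t = 0) (h1 : ∀ t, b ≤ t → F t = 1)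
    (hmono' : Monotone F')
    (hrc' : ∀ t, ContinuousWithinAt F' (Set.Ici t) t)
    (h0' : ∀ t, t < a → F' t = 0) (h1' : ∀ t, b ≤ t → F' t = 1)
    (hρ : 0 < ρ)
    (hρ' : ρ ≤ min (∫ s in a..b, F s) (∫ s in a..b, (1 - F s)))
    (hW : ∫ s, |F s - F' s| ≤ ρ) :
    ∀ t, F' t ≤ upperEnv F a b ρ t :=
  le_upperEnv_of_wasserstein_le_general F F' a b ρ hmono h0 h1 hmono' h0' h1' hW
end

section
/- Let F be a CDF of a measure supported on [a,b] and define the reflection of F around the point ((a+b)/2, 1/2) by 𝓕ʳᵉᶠˡ[F](t) = 1 − F(a+b−t). Then for any y ∈ (0,1), the generalized inverse F⁻¹(1−y) = a + b − F̃ₗₑfₜ⁻¹(y), where F̃ = 𝓕ʳᵉᶠˡ[F] and F̃ₗₑfₜ⁻¹(y) = inf{t ∈ ℝ | F̃(t) ≥ y} is the left inverse. -/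
/-- The left inverse `G⁻¹_left(y) = inf {t | G(t) ≥ y}` of a CDF `G`. -/
noncomputable def leftInv (F : ℝ → ℝ) (y : ℝ) : ℝ := sInf {t : ℝ | F t ≥ y}

/-!
Both sides are the same cut point: `{t | 1 - y < F t}` is an upper set of `ℝ`, so its infimum
`F⁻¹(1 - y)` equals the supremum `c` of its complement `{t | F t ≤ 1 - y}`; and the set whose
infimum is `F̃⁻¹_left(y)` is exactly the reflection `t ↦ a + b - t` of that complement, so its
infimum is `a + b - c`.
-/

section UpperSet

variable {α : Type*} [ConditionallyCompleteLinearOrder α] {s : Set α}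

theorem IsUpperSet.bddAbove_compl (hs : IsUpperSet s) (hne : s.Nonempty) : BddAbove sᶜ := by
  obtain ⟨x, hx⟩ := hne
  exact ⟨x, fun y hy => le_of_not_ge fun hxy => hy (hs hxy hx)⟩

theorem IsUpperSet.bddBelow (hs : IsUpperSet s) (hcne : sᶜ.Nonempty) : BddBelow s := by
  obtain ⟨y, hy⟩ := hcne
  exact ⟨y, fun x hx => le_of_not_ge fun hxy => hy (hs hxy hx)⟩

theorem IsUpperSet.csInf_eq_csSup_compl [DenselyOrdered α] (hs : IsUpperSet s)
    (hne : s.Nonempty) (hcne : sᶜ.Nonempty) : sInf s = sSup sᶜ := by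
  have hbdd := hs.bddBelow hcne
  have hcbdd := hs.bddAbove_compl hne
  refine le_antisymm ?_ (csSup_le hcne fun x hx => le_csInf hne fun y hy => ?_)
  · by_contra! hlt
    obtain ⟨t, hsup, hinf⟩ := exists_between hlt
    have ht : t ∈ sᶜ := fun ht => (csInf_le hbdd ht).not_gt hinf
    exact (le_csSup hcbdd ht).not_gt hsup
  · exact le_of_not_ge fun hyx => hx (hs hyx hy)

end UpperSet

theorem csInf_preimage_const_sub {s : Set ℝ} (c : ℝ) (hne : s.Nonempty) (hbdd : BddAbove s) :
    sInf ((c - ·) ⁻¹' s) = c - sSup s := by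
  have hinv : Function.Involutive (c - · : ℝ → ℝ) := fun t => sub_sub_cancel c t
  have hanti : Antitone (c - · : ℝ → ℝ) := fun _ _ hst => sub_le_sub_left hst c
  rw [← hinv.image_eq_preimage_symm,
    ← hanti.map_csSup_of_continuousAt (continuous_sub_left c).continuousAt hne hbdd]

theorem genInv_eq_csSup {F : ℝ → ℝ} (hF : Monotone F) {z : ℝ} (hgt : ∃ t, z < F t)
    (hle : ∃ t, F t ≤ z) : genInv F z = sSup {t | F t ≤ z} := by
  have hupper : IsUpperSet {t | z < F t} := fun _ _ hst hs => hs.trans_le (hF hst)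
  have hcompl : {t | z < F t}ᶜ = {t | F t ≤ z} := by ext; simp
  rw [genInv, ← hcompl]
  exact hupper.csInf_eq_csSup_compl hgt (hcompl ▸ hle)

theorem genInv_reflection_general (F : ℝ → ℝ) (a b : ℝ)
    (hmono : Monotone F)
    (h0 : ∀ t, t < a → F t = 0) (h1 : ∀ t, b ≤ t → F t = 1)
    (y : ℝ) (hy : y ∈ Set.Ioo (0 : ℝ) 1) :
    genInv F (1 - y) = a + b - leftInv (fun t => 1 - F (a + b - t)) y := by
  obtain ⟨hy0, hy1⟩ := hy
  have hgt : ∃ t, 1 - y < F t := ⟨b, by rw [h1 b le_rfl]; linarith⟩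
  have hle : {t | F t ≤ 1 - y}.Nonempty :=
    ⟨a - 1, by rw [Set.mem_ofPred_eq, h0 _ (by linarith)]; linarith⟩
  have hbdd : BddAbove {t | F t ≤ 1 - y} := by
    obtain ⟨t, ht⟩ := hgt
    exact ⟨t, fun s hs => le_of_not_ge fun hts => (hs.trans_lt ht).not_ge (hmono hts)⟩
  have hleft : leftInv (fun t => 1 - F (a + b - t)) y
      = sInf ((a + b - ·) ⁻¹' {s | F s ≤ 1 - y}) := by
    simp only [leftInv, ge_iff_le, le_sub_comm, Set.preimage_ofPred_eq]
  rw [genInv_eq_csSup hmono hgt hle, hleft, csInf_preimage_const_sub _ hle hbdd, sub_sub_cancel]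

/-- For a CDF `F` of a measure supported on `[a,b]` and its reflection
`F̃(t) = 1 - F(a + b - t)` around the point `((a+b)/2, 1/2)`, for any `y ∈ (0,1)` we have
`F⁻¹(1 - y) = a + b - F̃⁻¹_left(y)`. -/
theorem genInv_reflection (F : ℝ → ℝ) (a b : ℝ) (hab : a ≤ b)
    (hmono : Monotone F)
    (hrc : ∀ t, ContinuousWithinAt F (Set.Ici t) t)
    (h0 : ∀ t, t < a → F t = 0) (h1 : ∀ t, b ≤ t → F t = 1)
    (y : ℝ) (hy : y ∈ Set.Ioo (0 : ℝ) 1) :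
    genInv F (1 - y) = a + b - leftInv (fun t => 1 - F (a + b - t)) y :=
  genInv_reflection_general F a b hmono h0 h1 y hy
end
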